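/- arXiv:2601.06609 — 2 statements merged into one kernel-verified Lean document; each statement's English description precedes it below -/
import Mathlib

section
/- Let C be an E-linear code (left E-submodule of E^{2n}). Then C decomposes as a direct sum C = κ·C_Res ⊕ ζ·C_Tor, where κ·C_Res = {κ·v (componentwise scalar action) : v ∈ C_Res} and ζ·C_Tor = {ζ·v : v ∈ C_Tor}; in particular |C| = |C_Res|·|C_Tor|. -/
open Finset

/-- The non-unital ring `E`, realized as pairs `(u, v) ∈ F₂ × F₂`
representing `uκ + vζ`. -/
def Ering : Type := (ZMod 2) × (ZMod 2)

namespace Ering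

instance : AddCommGroup Ering := inferInstanceAs (AddCommGroup ((ZMod 2) × (ZMod 2)))
instance : DecidableEq Ering := inferInstanceAs (DecidableEq ((ZMod 2) × (ZMod 2)))
instance : Fintype Ering := inferInstanceAs (Fintype ((ZMod 2) × (ZMod 2)))

instance : Mul Ering := ⟨fun a b => (a.1 * b.1, a.2 * b.1)⟩

instance : NonUnitalRing Ering :=
  { (inferInstance : AddCommGroup Ering), (inferInstance : Mul Ering) with
    left_distrib := by decide
    right_distrib := by decide
    zero_mul := by decide
    mul_zero := by decide
    mul_assoc := by decide }

/-- The generator κ. -/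
def kappa : Ering := ((1 : ZMod 2), (0 : ZMod 2))
/-- The generator τ. -/
def tau : Ering := ((1 : ZMod 2), (1 : ZMod 2))
/-- ζ = κ + τ. -/
def zeta : Ering := ((0 : ZMod 2), (1 : ZMod 2))

/-- The scalar action of `F₂` on `E`: `u • e = e` if `u = 1`, else `0`. -/
def fsmul (u : ZMod 2) (e : Ering) : Ering := if u = 1 then e else 0

/-- `E`-vectors of length `2n`, written as a pair `(u | v)` of halves of length `n`. -/
abbrev VE (n : ℕ) := (Fin n → Ering) × (Fin n → Ering)

/-- `F₂`-vectors of length `2n`, written as a pair of halves of length `n`. -/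
abbrev VF (n : ℕ) := (Fin n → ZMod 2) × (Fin n → ZMod 2)

/-- Symplectic inner product on `E^{2n}`: `⟨(u|v),(u'|v')⟩ₛ = ⟨u,v'⟩ + ⟨v,u'⟩`. -/
def sympE {n : ℕ} (x y : VE n) : Ering := ∑ i, x.1 i * y.2 i + ∑ i, x.2 i * y.1 i

/-- Symplectic inner product on `F₂^{2n}`. -/
def sympF {n : ℕ} (x y : VF n) : ZMod 2 := ∑ i, x.1 i * y.2 i + ∑ i, x.2 i * y.1 i

/-- An `E`-linear code: a left `E`-submodule of `E^{2n}`. -/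
def IsLinearCode {n : ℕ} (C : Set (VE n)) : Prop :=
  (0 : VE n) ∈ C ∧ (∀ x ∈ C, ∀ y ∈ C, x + y ∈ C) ∧
    (∀ e : Ering, ∀ x ∈ C, ((fun i => e * x.1 i, fun i => e * x.2 i) : VE n) ∈ C)

/-- Componentwise reduction `π : E^{2n} → F₂^{2n}`, `π(uκ + vζ) = u`. -/
def resVec {n : ℕ} (x : VE n) : VF n := (fun i => (x.1 i).1, fun i => (x.2 i).1)

/-- For `e ∈ E` and `v ∈ F₂^{2n}`, the vector `ev ∈ E^{2n}` with entries `vᵢ • e`. -/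
def evec {n : ℕ} (e : Ering) (v : VF n) : VE n :=
  (fun i => fsmul (v.1 i) e, fun i => fsmul (v.2 i) e)

/-- The residue code `C_Res = π(C)`. -/
def resCode {n : ℕ} (C : Set (VE n)) : Set (VF n) := resVec '' C

/-- The torsion code `C_Tor = {v : ζv ∈ C}`. -/
def torCode {n : ℕ} (C : Set (VE n)) : Set (VF n) := {v | evec zeta v ∈ C}

/-- The left symplectic dual. -/
def leftDual {n : ℕ} (C : Set (VE n)) : Set (VE n) := {z | ∀ w ∈ C, sympE z w = 0}

/-- The right symplectic dual. -/
def rightDual {n : ℕ} (C : Set (VE n)) : Set (VE n) := {z | ∀ w ∈ C, sympE w z = 0}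

/-- The two-sided symplectic dual. -/
def dual {n : ℕ} (C : Set (VE n)) : Set (VE n) := leftDual C ∩ rightDual C

/-- The binary symplectic dual of `D ⊆ F₂^{2n}`. -/
def dualF {n : ℕ} (D : Set (VF n)) : Set (VF n) := {z | ∀ w ∈ D, sympF z w = 0}

/-- The two-sided symplectic hull. -/
def SHull {n : ℕ} (C : Set (VE n)) : Set (VE n) := C ∩ dual C

/-- The left symplectic hull. -/
def LSHull {n : ℕ} (C : Set (VE n)) : Set (VE n) := C ∩ leftDual C

/-- The right symplectic hull. -/
def RSHull {n : ℕ} (C : Set (VE n)) : Set (VE n) := C ∩ rightDual C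

/-- Symplectic hull of a binary code. -/
def SHullF {n : ℕ} (D : Set (VF n)) : Set (VF n) := D ∩ dualF D

/-- A free `E`-linear code: residue and torsion codes coincide. -/
def IsFree {n : ℕ} (C : Set (VE n)) : Prop := resCode C = torCode C

end Ering

open Ering

namespace EringAux

/-- Second-component vector. -/
def sndVec {n : ℕ} (x : VE n) : VF n := (fun i => (x.1 i).2, fun i => (x.2 i).2)

lemma e_aux1 : ∀ e : Ering, fsmul e.1 kappa = kappa * e := by decide

lemma e_aux2 : ∀ e : Ering, fsmul e.1 kappa + fsmul e.2 zeta = e := by decide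

lemma e_aux3 : ∀ e : Ering, fsmul e.2 zeta = e + fsmul e.1 kappa := by decide

lemma e_aux4 : ∀ u v u' v' : ZMod 2,
    fsmul u kappa + fsmul v zeta = fsmul u' kappa + fsmul v' zeta → u = u' ∧ v = v' := by
  decide

lemma e_aux5 : ∀ u v : ZMod 2,
    (fsmul u kappa + fsmul v zeta).1 = u ∧ (fsmul u kappa + fsmul v zeta).2 = v := by
  decide

lemma recomb {n : ℕ} (x : VE n) :
    evec kappa (resVec x) + evec zeta (sndVec x) = x := by
  refine Prod.ext (funext fun i => ?_) (funext fun i => ?_) <;>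
    exact e_aux2 _

lemma kappa_smul {n : ℕ} (x : VE n) :
    evec kappa (resVec x) = (fun i => kappa * x.1 i, fun i => kappa * x.2 i) := by
  refine Prod.ext (funext fun i => ?_) (funext fun i => ?_) <;> exact e_aux1 _

lemma zeta_part {n : ℕ} (x : VE n) :
    evec zeta (sndVec x) = x + evec kappa (resVec x) := by
  refine Prod.ext (funext fun i => ?_) (funext fun i => ?_) <;> exact e_aux3 _

lemma res_of_sum {n : ℕ} (a b : VF n) : resVec (evec kappa a + evec zeta b) = a := by
  refine Prod.ext (funext fun i => ?_) (funext fun i => ?_) <;> exact (e_aux5 _ _).1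

lemma snd_of_sum {n : ℕ} (a b : VF n) : sndVec (evec kappa a + evec zeta b) = b := by
  refine Prod.ext (funext fun i => ?_) (funext fun i => ?_) <;> exact (e_aux5 _ _).2

lemma sum_mem {n : ℕ} {C : Set (VE n)} (hC : IsLinearCode C)
    {a b : VF n} (ha : a ∈ resCode C) (hb : b ∈ torCode C) :
    evec kappa a + evec zeta b ∈ C := by
  obtain ⟨z, hz, hza⟩ := ha
  have hk : evec kappa a ∈ C := by
    rw [← hza, kappa_smul]
    exact hC.2.2 kappa z hz
  exact hC.2.1 _ hk _ hb

end EringAux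

open EringAux

/-- `C = κ·C_Res ⊕ ζ·C_Tor`: every element of `C` is uniquely
`κa + ζb` with `a ∈ C_Res`, `b ∈ C_Tor`; in particular `|C| = |C_Res|·|C_Tor|`. -/
theorem Ering.code_decomposition {n : ℕ} (C : Set (VE n)) (hC : IsLinearCode C) :
    (∀ x : VE n, x ∈ C ↔
      ∃ a ∈ resCode C, ∃ b ∈ torCode C, x = evec kappa a + evec zeta b) ∧
    (∀ a ∈ resCode C, ∀ b ∈ torCode C, ∀ a' ∈ resCode C, ∀ b' ∈ torCode C,
      evec kappa a + evec zeta b = evec kappa a' + evec zeta b' → a = a' ∧ b = b') ∧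
    Nat.card ↥C = Nat.card ↥(resCode C) * Nat.card ↥(torCode C) := by
  have hforward : ∀ x ∈ C, resVec x ∈ resCode C ∧ sndVec x ∈ torCode C := by
    intro x hx
    refine ⟨⟨x, hx, rfl⟩, ?_⟩
    show evec zeta (sndVec x) ∈ C
    rw [zeta_part x, kappa_smul]
    exact hC.2.1 x hx _ (hC.2.2 kappa x hx)
  refine ⟨fun x => ⟨fun hx => ?_, fun ⟨a, ha, b, hb, hx⟩ => hx ▸ sum_mem hC ha hb⟩,
    fun a _ b _ a' _ b' _ h => ?_, ?_⟩
  · exact ⟨resVec x, (hforward x hx).1, sndVec x, (hforward x hx).2, (recomb x).symm⟩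
  · constructor
    · refine Prod.ext (funext fun i => ?_) (funext fun i => ?_)
      · exact (e_aux4 _ _ _ _ (congrFun (congrArg Prod.fst h) i)).1
      · exact (e_aux4 _ _ _ _ (congrFun (congrArg Prod.snd h) i)).1
    · refine Prod.ext (funext fun i => ?_) (funext fun i => ?_)
      · exact (e_aux4 _ _ _ _ (congrFun (congrArg Prod.fst h) i)).2
      · exact (e_aux4 _ _ _ _ (congrFun (congrArg Prod.snd h) i)).2
  · have e : ↥C ≃ ↥(resCode C) × ↥(torCode C) :=
      { toFun := fun x => (⟨resVec x.1, (hforward x.1 x.2).1⟩,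
          ⟨sndVec x.1, (hforward x.1 x.2).2⟩)
        invFun := fun p => ⟨evec kappa p.1.1 + evec zeta p.2.1,
          sum_mem hC p.1.2 p.2.2⟩
        left_inv := fun x => Subtype.ext (recomb x.1)
        right_inv := fun p => by
          refine Prod.ext (Subtype.ext ?_) (Subtype.ext ?_)
          · exact res_of_sum _ _
          · exact snd_of_sum _ _ }
    rw [Nat.card_congr e, Nat.card_prod]
end

section
/- Let C be an E-linear code of length 2n. Then the residue code of the right symplectic dual equals the symplectic dual of the torsion code: (C^{⊥_{S_R}})_Res = (C_Tor)^{⊥_S}, and the torsion code of the right symplectic dual is all of F₂^{2n}: (C^{⊥_{S_R}})_Tor = F₂^{2n}. -/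
open Finset

/-!
Since `ab = (a₁b₁, a₂b₁)` depends on `b` only through its residue, `⟨w, z⟩ₛ = 0` says exactly
that `π(z)` is symplectic-orthogonal to `π(w)` and to the `ζ`-part of `w`. For a linear code the
`ζ`-parts of the codewords are exactly `C_Tor` (with `v = ζ`-part of `ζv`), which also contains every
residue `π(w)` (as `ζw = ζπ(w)`), so `C^{⊥_{S_R}} = π⁻¹(C_Tor^{⊥_S})`. Both claims follow: `π` is
surjective, and `π(ζv) = 0`.
-/

namespace Ering

variable {n : ℕ}

/-- The `ζ`-coordinates of `x`, so that `x = κ·π(x) + ζ·zetaPart x`. -/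
def zetaPart (x : VE n) : VF n := (fun i => (x.1 i).2, fun i => (x.2 i).2)

lemma fst_add (a b : Ering) : (a + b).1 = a.1 + b.1 := rfl

lemma snd_add (a b : Ering) : (a + b).2 = a.2 + b.2 := rfl

lemma fst_mul (a b : Ering) : (a * b).1 = a.1 * b.1 := rfl

lemma snd_mul (a b : Ering) : (a * b).2 = a.2 * b.1 := rfl

lemma mk_eq_zero (a b : ZMod 2) : ((a, b) : Ering) = 0 ↔ a = 0 ∧ b = 0 := Prod.mk_eq_zero

lemma fst_sum {ι : Type*} (s : Finset ι) (f : ι → Ering) :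
    (∑ i ∈ s, f i).1 = ∑ i ∈ s, (f i).1 :=
  map_sum (AddMonoidHom.fst (ZMod 2) (ZMod 2)) f s

lemma snd_sum {ι : Type*} (s : Finset ι) (f : ι → Ering) :
    (∑ i ∈ s, f i).2 = ∑ i ∈ s, (f i).2 :=
  map_sum (AddMonoidHom.snd (ZMod 2) (ZMod 2)) f s

lemma fst_fsmul_kappa : ∀ u : ZMod 2, (fsmul u kappa).1 = u := by decide

lemma fst_fsmul_zeta : ∀ u : ZMod 2, (fsmul u zeta).1 = 0 := by decide

lemma snd_fsmul_zeta : ∀ u : ZMod 2, (fsmul u zeta).2 = u := by decide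

lemma zeta_mul : ∀ e : Ering, zeta * e = fsmul e.1 zeta := by decide

lemma kappa_mul_add_self : ∀ e : Ering, kappa * e + e = fsmul e.2 zeta := by decide

lemma resVec_evec_kappa (f : VF n) : resVec (evec kappa f) = f := by
  ext i <;> simp [resVec, evec, fst_fsmul_kappa]

lemma resVec_evec_zeta (v : VF n) : resVec (evec zeta v) = 0 := by
  ext i <;> simp [resVec, evec, fst_fsmul_zeta]

lemma zetaPart_evec_zeta (v : VF n) : zetaPart (evec zeta v) = v := by
  ext i <;> simp [zetaPart, evec, snd_fsmul_zeta]

lemma resVec_surjective : Function.Surjective (resVec (n := n)) :=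
  fun f => ⟨evec kappa f, resVec_evec_kappa f⟩

lemma sympF_comm (x y : VF n) : sympF x y = sympF y x := by
  simp only [sympF, mul_comm (x.1 _), mul_comm (x.2 _)]
  exact add_comm _ _

lemma sympE_eq (x y : VE n) :
    sympE x y = (sympF (resVec x) (resVec y), sympF (zetaPart x) (resVec y)) := by
  refine Prod.ext ?_ ?_ <;>
    simp [sympE, sympF, resVec, zetaPart, fst_add, snd_add, fst_mul, snd_mul, fst_sum, snd_sum]

lemma sympF_zero_right (x : VF n) : sympF x 0 = 0 := by
  simp [sympF]

lemma zero_mem_dualF (D : Set (VF n)) : (0 : VF n) ∈ dualF D :=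
  fun w _ => by rw [sympF_comm, sympF_zero_right]

lemma resVec_mem_torCode {C : Set (VE n)} (hC : IsLinearCode C) {w : VE n} (hw : w ∈ C) :
    resVec w ∈ torCode C := by
  have hζw : evec zeta (resVec w) = ((fun i => zeta * w.1 i, fun i => zeta * w.2 i) : VE n) := by
    ext i <;> simp [evec, resVec, zeta_mul]
  simpa [torCode, hζw] using hC.2.2 zeta w hw

lemma zetaPart_mem_torCode {C : Set (VE n)} (hC : IsLinearCode C) {w : VE n} (hw : w ∈ C) :
    zetaPart w ∈ torCode C := by
  have hκw : evec zeta (zetaPart w) =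
      ((fun i => kappa * w.1 i, fun i => kappa * w.2 i) : VE n) + w := by
    ext i <;> simp [evec, zetaPart, ← kappa_mul_add_self]
  simpa [torCode, hκw] using hC.2.1 _ (hC.2.2 kappa w hw) w hw

lemma mem_dualF_torCode_iff {C : Set (VE n)} (hC : IsLinearCode C) (f : VF n) :
    f ∈ dualF (torCode C) ↔ ∀ w ∈ C, sympF f (resVec w) = 0 ∧ sympF f (zetaPart w) = 0 := by
  refine ⟨fun hf w hw => ⟨hf _ (resVec_mem_torCode hC hw), hf _ (zetaPart_mem_torCode hC hw)⟩,
    fun hf v hv => ?_⟩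
  simpa [zetaPart_evec_zeta] using (hf _ hv).2

lemma rightDual_eq_preimage {C : Set (VE n)} (hC : IsLinearCode C) :
    rightDual C = resVec ⁻¹' dualF (torCode C) := by
  ext z
  simp only [rightDual, Set.mem_ofPred_eq, Set.mem_preimage, mem_dualF_torCode_iff hC, sympE_eq,
    sympF_comm _ (resVec z)]
  exact forall₂_congr fun w _ => mk_eq_zero _ _

end Ering

open Ering
/-- `(C^{⊥_{S_R}})_Res = (C_Tor)^{⊥_S}` and `(C^{⊥_{S_R}})_Tor = F₂^{2n}`. -/
theorem Ering.rightDual_res_tor {n : ℕ} (C : Set (VE n)) (hC : IsLinearCode C) :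
    resCode (rightDual C) = dualF (torCode C) ∧
    torCode (rightDual C) = Set.univ := by
  rw [rightDual_eq_preimage hC]
  refine ⟨Set.image_preimage_eq _ resVec_surjective, ?_⟩
  ext v
  simpa [torCode, resVec_evec_zeta] using zero_mem_dualF (torCode C)
end
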